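/- arXiv:2510.24080 — 3 statements merged into one kernel-verified Lean document; each statement's English description precedes it below -/
import Mathlib

section
/- Let ω > 0, α₂(t) = A + B·cos(2ωt) + C·sin(2ωt) with α₂(t) > 0 for all t, and g(t) = α₂(t)^(-5/2). If z : ℝ → ℝ is twice differentiable and satisfies z'' + ω²·z + g(t)·z² = 0, then the function I(t) = α₂(t)·z'(t)² − α₂'(t)·z(t)·z'(t) + (ω²·α₂(t) + (1/2)·α₂''(t))·z(t)² + (2/3)·α₂(t)·g(t)·z(t)³ is constant. -/
/-!
Differentiate `I` and eliminate `z''` with the equation of motion. The terms in `z z'` and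
`z² z'` cancel identically; what remains is `(2ω² α' + α'''/2) z² + (α' g + (2/3) (α g)') z³`.
The first coefficient vanishes because `α` is a sinusoid of frequency `2ω`, so
`α''' = -(2ω)² α'`; the second because `α g = α^(-3/2)`, whence `(α g)' = -(3/2) α' g`.
-/

open Real

noncomputable def sinusoid (A B C k t : ℝ) : ℝ := A + B * cos (k * t) + C * sin (k * t)

theorem hasDerivAt_sinusoid (A B C k t : ℝ) :
    HasDerivAt (sinusoid A B C k) (sinusoid 0 (k * C) (-(k * B)) k t) t := by
  have hc := ((hasDerivAt_id t).const_mul k).cos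
  have hs := ((hasDerivAt_id t).const_mul k).sin
  refine (((hasDerivAt_const t A).add (hc.const_mul B)).add (hs.const_mul C)).congr_deriv ?_
  simp only [sinusoid, id]; ring

theorem deriv_sinusoid (A B C k : ℝ) :
    deriv (sinusoid A B C k) = sinusoid 0 (k * C) (-(k * B)) k :=
  funext fun t => (hasDerivAt_sinusoid A B C k t).deriv

theorem differentiable_sinusoid (A B C k : ℝ) : Differentiable ℝ (sinusoid A B C k) :=
  fun t => (hasDerivAt_sinusoid A B C k t).differentiableAt

theorem hasDerivAt_deriv_deriv_sinusoid (A B C k t : ℝ) :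
    HasDerivAt (deriv (deriv (sinusoid A B C k))) (-k ^ 2 * deriv (sinusoid A B C k) t) t := by
  simp only [deriv_sinusoid]
  exact (hasDerivAt_sinusoid _ _ _ _ _).congr_deriv (by simp only [sinusoid]; ring)

theorem HasDerivAt.mul_rpow_self {f : ℝ → ℝ} {f' t : ℝ} (hf : HasDerivAt f f' t) (hpos : 0 < f t)
    (p : ℝ) : HasDerivAt (fun s => f s * f s ^ p) ((p + 1) * f' * f t ^ p) t := by
  refine (hf.mul (hf.rpow_const (p := p) (Or.inl hpos.ne'))).congr_deriv ?_
  have : f t * f t ^ (p - 1) = f t ^ p := by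
    rw [mul_comm, ← rpow_add_one hpos.ne']; ring_nf
  linear_combination (p * f') * this

noncomputable def oscillatorInvariant (ω : ℝ) (α α' α'' g z z' : ℝ → ℝ) (t : ℝ) : ℝ :=
  α t * z' t ^ 2 - α' t * z t * z' t + (ω ^ 2 * α t + 1 / 2 * α'' t) * z t ^ 2
    + 2 / 3 * α t * g t * z t ^ 3

theorem hasDerivAt_oscillatorInvariant {ω : ℝ} {α α' α'' g z z' : ℝ → ℝ} {t : ℝ}
    (hα : HasDerivAt α (α' t) t) (hα' : HasDerivAt α' (α'' t) t)
    (hα'' : HasDerivAt α'' (-(2 * ω) ^ 2 * α' t) t)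
    (hαg : HasDerivAt (fun s => α s * g s) (-(3 / 2) * α' t * g t) t)
    (hz : HasDerivAt z (z' t) t) (hz' : HasDerivAt z' (-(ω ^ 2 * z t) - g t * z t ^ 2) t) :
    HasDerivAt (oscillatorInvariant ω α α' α'' g z z') 0 t := by
  have hcubic := (hαg.const_mul (2 / 3)).mul (hz.fun_pow 3)
  simp only [← mul_assoc] at hcubic
  refine ((((hα.mul (hz'.fun_pow 2)).sub ((hα'.mul hz).mul hz')).add
    (((hα.const_mul (ω ^ 2)).add (hα''.const_mul (1 / 2))).mul (hz.fun_pow 2))).add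
    hcubic).congr_deriv ?_
  norm_num; ring

theorem oscillatorInvariant_eq {ω : ℝ} {α α' α'' g z z' : ℝ → ℝ}
    (hα : ∀ t, HasDerivAt α (α' t) t) (hα' : ∀ t, HasDerivAt α' (α'' t) t)
    (hα'' : ∀ t, HasDerivAt α'' (-(2 * ω) ^ 2 * α' t) t)
    (hαg : ∀ t, HasDerivAt (fun s => α s * g s) (-(3 / 2) * α' t * g t) t)
    (hz : ∀ t, HasDerivAt z (z' t) t)
    (hz' : ∀ t, HasDerivAt z' (-(ω ^ 2 * z t) - g t * z t ^ 2) t) (t t₀ : ℝ) :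
    oscillatorInvariant ω α α' α'' g z z' t = oscillatorInvariant ω α α' α'' g z z' t₀ :=
  have hI t := hasDerivAt_oscillatorInvariant (hα t) (hα' t) (hα'' t) (hαg t) (hz t) (hz' t)
  is_const_of_deriv_eq_zero (fun t => (hI t).differentiableAt) (fun t => (hI t).deriv) t t₀

theorem stmt3_general (A B C ω : ℝ)
    (α₂ g z : ℝ → ℝ)
    (hα₂ : ∀ t, α₂ t = A + B * Real.cos (2 * ω * t) + C * Real.sin (2 * ω * t))
    (hαpos : ∀ t, 0 < α₂ t)
    (hg : ∀ t, g t = (α₂ t) ^ (-(5 / 2 : ℝ)))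
    (hz1 : Differentiable ℝ z) (hz2 : Differentiable ℝ (deriv z))
    (hode : ∀ t, deriv (deriv z) t + ω ^ 2 * z t + g t * z t ^ 2 = 0) :
    ∃ c : ℝ, ∀ t,
      α₂ t * (deriv z t) ^ 2 - deriv α₂ t * z t * deriv z t
        + (ω ^ 2 * α₂ t + (1 / 2) * deriv (deriv α₂) t) * z t ^ 2
        + (2 / 3) * α₂ t * g t * z t ^ 3 = c := by
  obtain rfl : α₂ = sinusoid A B C (2 * ω) := funext hα₂
  have hα : Differentiable ℝ (sinusoid A B C (2 * ω)) := differentiable_sinusoid A B C _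
  have hα' : Differentiable ℝ (deriv (sinusoid A B C (2 * ω))) := by
    rw [deriv_sinusoid]; exact differentiable_sinusoid _ _ _ _
  have hαg t : HasDerivAt (fun s => sinusoid A B C (2 * ω) s * g s)
      (-(3 / 2) * deriv (sinusoid A B C (2 * ω)) t * g t) t := by
    simp only [hg]
    exact ((hα t).hasDerivAt.mul_rpow_self (hαpos t) _).congr_deriv (by norm_num)
  have hz' t : HasDerivAt (deriv z) (-(ω ^ 2 * z t) - g t * z t ^ 2) t :=
    (hz2 t).hasDerivAt.congr_deriv (by linear_combination hode t)
  exact ⟨_, fun t => oscillatorInvariant_eq (fun t => (hα t).hasDerivAt)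
    (fun t => (hα' t).hasDerivAt) (hasDerivAt_deriv_deriv_sinusoid A B C _) hαg
    (fun t => (hz1 t).hasDerivAt) hz' t 0⟩

theorem stmt3 (A B C ω : ℝ) (hω : ω > 0)
    (α₂ g z : ℝ → ℝ)
    (hα₂ : ∀ t, α₂ t = A + B * Real.cos (2 * ω * t) + C * Real.sin (2 * ω * t))
    (hαpos : ∀ t, 0 < α₂ t)
    (hg : ∀ t, g t = (α₂ t) ^ (-(5 / 2 : ℝ)))
    (hz1 : Differentiable ℝ z) (hz2 : Differentiable ℝ (deriv z))
    (hode : ∀ t, deriv (deriv z) t + ω ^ 2 * z t + g t * z t ^ 2 = 0) :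
    ∃ c : ℝ, ∀ t,
      α₂ t * (deriv z t) ^ 2 - deriv α₂ t * z t * deriv z t
        + (ω ^ 2 * α₂ t + (1 / 2) * deriv (deriv α₂) t) * z t ^ 2
        + (2 / 3) * α₂ t * g t * z t ^ 3 = c :=
  stmt3_general A B C ω α₂ g z hα₂ hαpos hg hz1 hz2 hode
end

section
/- Let ω > 0, A > R > 0, g(t) = α₂(t)^(-5/2) with α₂(t) = A + R·cos(2ωt) > 0, and let z solve z'' + ω²z + g(t)z² = 0 with z(0) = z₀ > 0, z'(0) = 0, where z₀ < (ω²/2)·(A−R)·(A+R)^(3/2). Then at each stroboscopic time t_k = kπ/ω, the point z(t_k) lies in the bounded component of { z : I₀ − ω²(A−R)z² − (2/3)(A+R)^(-3/2)z³ ≥ 0 }, where I₀ = ω²(A−R)z₀² + (2/3)(A+R)^(-3/2)z₀³. -/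
/-!
Multiplying the Lewis invariant by `α₂` and completing the square gives
`α₂ I ≥ V(z) := c z² + (2/3) z³ / √α₂` with the Ermakov constant `c = ω² (A² - R²)`.
The cubic `V` has its local maximum `c³ α₂ / 3` at `z = -c √α₂`, and the bound on `z₀` says
precisely that `I = I(0) < c³ / 3`, so by continuity `z` never reaches the moving barrier
`-c √α₂(t)`. At `t_k` we have `α₂ = A + R`, the sublevel set `{V ≤ (A + R) I}` is the set of the
statement, and since `V` decreases on `[-c √(A + R), 0]` and increases on `[0, ∞)`, the whole
interval between `0` and `z(t_k)` lies in it.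
-/

open Real Set

theorem rpow_three_halves {a : ℝ} (ha : 0 ≤ a) : a ^ (3 / 2 : ℝ) = a * √a := by
  rw [show (3 / 2 : ℝ) = 1 + 1 / 2 by norm_num, rpow_add' ha (by norm_num), rpow_one, sqrt_eq_rpow]

noncomputable def cubicPotential (c s x : ℝ) : ℝ := c * x ^ 2 + 2 / 3 * x ^ 3 / s

section CubicPotential

variable {c s : ℝ}

theorem cubicPotential_sub_cubicPotential (hs : s ≠ 0) (x y : ℝ) :
    cubicPotential c s y - cubicPotential c s x =
      (y - x) * (c * (x + y) + 2 / 3 * (x ^ 2 + x * y + y ^ 2) / s) := by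
  unfold cubicPotential
  field_simp
  ring

theorem cubicPotential_neg_mul (hs : s ≠ 0) : cubicPotential c s (-(c * s)) = c ^ 3 * s ^ 2 / 3 := by
  unfold cubicPotential
  field_simp
  ring

theorem cubicPotential_mul_div_two (hs : s ≠ 0) : cubicPotential c s (c * s / 2) = c ^ 3 * s ^ 2 / 3 := by
  unfold cubicPotential
  field_simp
  ring

theorem strictMonoOn_cubicPotential (hc : 0 ≤ c) (hs : 0 < s) :
    StrictMonoOn (cubicPotential c s) (Ici 0) := by
  intro x hx y hy hxy
  rw [← sub_pos, cubicPotential_sub_cubicPotential hs.ne']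
  have hx₀ : 0 ≤ x := hx
  refine mul_pos (sub_pos.2 hxy) (add_pos_of_nonneg_of_pos (mul_nonneg hc (by linarith)) ?_)
  exact div_pos (by nlinarith) hs

theorem antitoneOn_cubicPotential (hs : 0 < s) :
    AntitoneOn (cubicPotential c s) (Icc (-(c * s)) 0) := by
  rintro x ⟨hx₁, hx₂⟩ y ⟨hy₁, hy₂⟩ hxy
  rw [← sub_nonneg, cubicPotential_sub_cubicPotential hs.ne']
  refine mul_nonneg_of_nonpos_of_nonpos (sub_nonpos.2 hxy) ?_
  have hnum : c * s * (x + y) + 2 / 3 * (x ^ 2 + x * y + y ^ 2) ≤ 0 := by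
    nlinarith [mul_nonpos_of_nonneg_of_nonpos (neg_le_iff_add_nonneg.1 hx₁) hx₂,
      mul_nonpos_of_nonneg_of_nonpos (neg_le_iff_add_nonneg.1 hy₁) hy₂,
      mul_nonpos_of_nonneg_of_nonpos (neg_le_iff_add_nonneg.1 hx₁) hy₂,
      mul_nonpos_of_nonneg_of_nonpos (neg_le_iff_add_nonneg.1 hy₁) hx₂]
  calc c * (y + x) + 2 / 3 * (y ^ 2 + y * x + x ^ 2) / s
      = (c * s * (x + y) + 2 / 3 * (x ^ 2 + x * y + y ^ 2)) / s := by field_simp; ring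
    _ ≤ 0 := div_nonpos_of_nonpos_of_nonneg hnum hs.le

theorem cubicPotential_le_of_mem_uIcc (hc : 0 ≤ c) (hs : 0 < s) {u x : ℝ} (hu : -(c * s) ≤ u)
    (hx : x ∈ uIcc 0 u) : cubicPotential c s x ≤ cubicPotential c s u := by
  rcases le_total 0 u with h | h
  · rw [uIcc_of_le h] at hx
    exact (strictMonoOn_cubicPotential hc hs).monotoneOn hx.1 h hx.2
  · rw [uIcc_of_ge h] at hx
    exact antitoneOn_cubicPotential hs ⟨hu, h⟩ ⟨hu.trans hx.1, hx.2⟩ hx.1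

theorem cubicPotential_lt_of_lt_half (hc : 0 ≤ c) (hs : 0 < s) {x : ℝ} (hx : 0 ≤ x)
    (hxc : x < c * s / 2) : cubicPotential c s x < c ^ 3 * s ^ 2 / 3 :=
  cubicPotential_mul_div_two hs.ne' ▸
    strictMonoOn_cubicPotential hc hs hx (div_nonneg (mul_nonneg hc hs.le) zero_le_two) hxc

theorem mem_connectedComponentIn_cubicPotential (hc : 0 ≤ c) (hs : 0 < s) {u E : ℝ}
    (hu : -(c * s) ≤ u) (hE : cubicPotential c s u ≤ E) :
    u ∈ connectedComponentIn {x | cubicPotential c s x ≤ E} 0 :=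
  isPreconnected_uIcc.subset_connectedComponentIn left_mem_uIcc
    (fun _ hx => (cubicPotential_le_of_mem_uIcc hc hs hu hx).trans hE) right_mem_uIcc

theorem neg_mul_sqrt_lt_of_cubicPotential_le {α z : ℝ → ℝ} {E : ℝ} (hα : Continuous α)
    (hz : Continuous z) (hpos : ∀ t, 0 < α t) (hE : E < c ^ 3 / 3)
    (hbound : ∀ t, cubicPotential c √(α t) (z t) ≤ α t * E) {t₀ : ℝ}
    (h₀ : -(c * √(α t₀)) ≤ z t₀) (t : ℝ) : -(c * √(α t)) < z t := by
  by_contra! ht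
  obtain ⟨s, hs⟩ := intermediate_value_univ₂ (g := fun t => -(c * √(α t))) hz (by fun_prop) ht h₀
  have h := hbound s
  rw [hs, cubicPotential_neg_mul (sqrt_pos.2 (hpos s)).ne', sq_sqrt (hpos s).le] at h
  nlinarith [hpos s]

end CubicPotential

theorem cubicPotential_mul_sqrt {a : ℝ} (ha : 0 < a) (b x : ℝ) :
    cubicPotential (a * b) √a x = a * (b * x ^ 2 + 2 / 3 * a ^ (-(3 / 2) : ℝ) * x ^ 3) := by
  have := sqrt_pos.2 ha
  rw [cubicPotential, rpow_neg ha.le, rpow_three_halves ha.le]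
  field_simp

theorem cubicPotential_mul_sqrt_le_iff {a : ℝ} (ha : 0 < a) (b E x : ℝ) :
    cubicPotential (a * b) √a x ≤ a * E ↔ 0 ≤ E - b * x ^ 2 - 2 / 3 * a ^ (-(3 / 2) : ℝ) * x ^ 3 := by
  rw [cubicPotential_mul_sqrt ha, mul_le_mul_iff_of_pos_left ha]
  constructor <;> intro h <;> linarith

/-- The Lewis invariant `I(z, p, t)` of the paper at `α = a, α' = a', α'' = a''`, with
`α g = a ^ (-3/2)` for `g = α ^ (-5/2)`. -/
noncomputable def lewisInvariant (ω a a' a'' x v : ℝ) : ℝ :=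
  a * v ^ 2 - a' * x * v + (ω ^ 2 * a + a'' / 2) * x ^ 2 + 2 / 3 * a ^ (-(3 / 2) : ℝ) * x ^ 3

section LewisInvariant

variable {ω : ℝ} {α α' α'' z v : ℝ → ℝ}

theorem hasDerivAt_lewisInvariant {t : ℝ} (hα : HasDerivAt α (α' t) t)
    (hα' : HasDerivAt α' (α'' t) t) (hα'' : HasDerivAt α'' (-4 * ω ^ 2 * α' t) t)
    (hpos : 0 < α t) (hz : HasDerivAt z (v t) t)
    (hv : HasDerivAt v (-(ω ^ 2 * z t) - α t ^ (-(5 / 2) : ℝ) * z t ^ 2) t) :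
    HasDerivAt (fun t => lewisInvariant ω (α t) (α' t) (α'' t) (z t) (v t)) 0 t := by
  have hpow : HasDerivAt (fun t => α t ^ (-(3 / 2) : ℝ))
      (α' t * (-(3 / 2)) * α t ^ (-(5 / 2) : ℝ)) t := by
    convert hα.rpow_const (p := -(3 / 2)) (Or.inl hpos.ne') using 3
    norm_num
  have H := (((hα.mul (hv.pow 2)).sub ((hα'.mul hz).mul hv)).add
    (((hα.const_mul (ω ^ 2)).add (hα''.div_const 2)).mul (hz.pow 2))).add
    ((hpow.const_mul (2 / 3)).mul (hz.pow 3))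
  have hαg : α t * α t ^ (-(5 / 2) : ℝ) = α t ^ (-(3 / 2) : ℝ) := by
    rw [show (-(3 / 2) : ℝ) = -(5 / 2) + 1 by norm_num, rpow_add_one hpos.ne', mul_comm]
  refine H.congr_deriv ?_
  simp only [Pi.mul_apply, Pi.pow_apply, Pi.add_apply, Nat.cast_ofNat]
  linear_combination (-2 * z t ^ 2 * v t) * hαg

theorem lewisInvariant_eq_of_hasDerivAt (hα : ∀ t, HasDerivAt α (α' t) t)
    (hα' : ∀ t, HasDerivAt α' (α'' t) t) (hα'' : ∀ t, HasDerivAt α'' (-4 * ω ^ 2 * α' t) t)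
    (hpos : ∀ t, 0 < α t) (hz : ∀ t, HasDerivAt z (v t) t)
    (hv : ∀ t, HasDerivAt v (-(ω ^ 2 * z t) - α t ^ (-(5 / 2) : ℝ) * z t ^ 2) t) (t s : ℝ) :
    lewisInvariant ω (α t) (α' t) (α'' t) (z t) (v t) =
      lewisInvariant ω (α s) (α' s) (α'' s) (z s) (v s) := by
  have H t := hasDerivAt_lewisInvariant (hα t) (hα' t) (hα'' t) (hpos t) (hz t) (hv t)
  exact is_const_of_deriv_eq_zero (fun t => (H t).differentiableAt) (fun t => (H t).deriv) t s

end LewisInvariant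

theorem mul_lewisInvariant {a : ℝ} (ha : 0 < a) (ω a' a'' x v : ℝ) :
    a * lewisInvariant ω a a' a'' x v = (a * v - a' * x / 2) ^ 2
      + (ω ^ 2 * a ^ 2 + a * a'' / 2 - a' ^ 2 / 4) * x ^ 2 + 2 / 3 * x ^ 3 / √a := by
  have := sqrt_pos.2 ha
  rw [lewisInvariant, rpow_neg ha.le, rpow_three_halves ha.le]
  field_simp
  ring

theorem hasDerivAt_mul_cos_two_mul (B ω t : ℝ) :
    HasDerivAt (fun t => B * cos (2 * ω * t)) (-(2 * ω * B) * sin (2 * ω * t)) t := by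
  refine (((hasDerivAt_id t).const_mul (2 * ω)).cos.const_mul B).congr_deriv ?_
  simp only [id]
  ring

theorem hasDerivAt_mul_sin_two_mul (B ω t : ℝ) :
    HasDerivAt (fun t => B * sin (2 * ω * t)) (2 * ω * B * cos (2 * ω * t)) t := by
  refine (((hasDerivAt_id t).const_mul (2 * ω)).sin.const_mul B).congr_deriv ?_
  simp only [id]
  ring

theorem cubicPotential_le_mul_lewisInvariant {A R ω θ : ℝ} (hpos : 0 < A + R * cos θ) (x v : ℝ) :
    cubicPotential (ω ^ 2 * (A ^ 2 - R ^ 2)) √(A + R * cos θ) x ≤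
      (A + R * cos θ) * lewisInvariant ω (A + R * cos θ) (-(2 * ω * R) * sin θ)
        (-(4 * ω ^ 2 * R) * cos θ) x v := by
  -- `ω²α² + αα''/2 - α'²/4` is a first integral of `α''' + 4ω²α' = 0`.
  have hErmakov : ω ^ 2 * (A + R * cos θ) ^ 2 + (A + R * cos θ) * (-(4 * ω ^ 2 * R) * cos θ) / 2
      - (-(2 * ω * R) * sin θ) ^ 2 / 4 = ω ^ 2 * (A ^ 2 - R ^ 2) := by
    linear_combination (-(ω ^ 2 * R ^ 2)) * sin_sq_add_cos_sq θ
  rw [mul_lewisInvariant hpos, hErmakov, cubicPotential]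
  linarith [sq_nonneg ((A + R * cos θ) * v - -(2 * ω * R) * sin θ * x / 2)]

theorem lewisInvariant_cos_eq {A R ω : ℝ} {z v : ℝ → ℝ}
    (hpos : ∀ t, 0 < A + R * cos (2 * ω * t)) (hz : ∀ t, HasDerivAt z (v t) t)
    (hv : ∀ t, HasDerivAt v
      (-(ω ^ 2 * z t) - (A + R * cos (2 * ω * t)) ^ (-(5 / 2) : ℝ) * z t ^ 2) t) (t s : ℝ) :
    lewisInvariant ω (A + R * cos (2 * ω * t)) (-(2 * ω * R) * sin (2 * ω * t))
        (-(4 * ω ^ 2 * R) * cos (2 * ω * t)) (z t) (v t) =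
      lewisInvariant ω (A + R * cos (2 * ω * s)) (-(2 * ω * R) * sin (2 * ω * s))
        (-(4 * ω ^ 2 * R) * cos (2 * ω * s)) (z s) (v s) :=
  lewisInvariant_eq_of_hasDerivAt (α := fun t => A + R * cos (2 * ω * t))
    (α' := fun t => -(2 * ω * R) * sin (2 * ω * t))
    (α'' := fun t => -(4 * ω ^ 2 * R) * cos (2 * ω * t))
    (fun t => (hasDerivAt_mul_cos_two_mul R ω t).const_add A)
    (fun t => (hasDerivAt_mul_sin_two_mul _ ω t).congr_deriv (by ring))
    (fun t => (hasDerivAt_mul_cos_two_mul _ ω t).congr_deriv (by ring)) hpos hz hv t s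

theorem stmt13 (A R ω z₀ : ℝ) (hω : ω > 0) (hAR : A > R) (hR : R > 0)
    (hz₀ : 0 < z₀) (hcrit : z₀ < (ω ^ 2 / 2) * (A - R) * (A + R) ^ ((3 : ℝ) / 2))
    (α₂ g z : ℝ → ℝ)
    (hα₂ : ∀ t, α₂ t = A + R * Real.cos (2 * ω * t))
    (hg : ∀ t, g t = (α₂ t) ^ (-(5 / 2) : ℝ))
    (hz1 : Differentiable ℝ z) (hz2 : Differentiable ℝ (deriv z))
    (hode : ∀ t, deriv (deriv z) t + ω ^ 2 * z t + g t * z t ^ 2 = 0)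
    (hinit : z 0 = z₀) (hinit' : deriv z 0 = 0) :
    ∀ k : ℤ,
      z ((k : ℝ) * Real.pi / ω) ∈
        connectedComponentIn
          {x : ℝ | 0 ≤ (ω ^ 2 * (A - R) * z₀ ^ 2 + (2 / 3) * (A + R) ^ (-(3 / 2) : ℝ) * z₀ ^ 3)
            - ω ^ 2 * (A - R) * x ^ 2 - (2 / 3) * (A + R) ^ (-(3 / 2) : ℝ) * x ^ 3} 0 := by
  intro k
  obtain rfl : α₂ = fun t => A + R * cos (2 * ω * t) := funext hα₂
  beta_reduce at hg
  have hA : 0 < A + R := by linarith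
  have hs : 0 < √(A + R) := sqrt_pos.2 hA
  have hpos (t : ℝ) : 0 < A + R * cos (2 * ω * t) := by nlinarith [neg_one_le_cos (2 * ω * t)]
  set c := ω ^ 2 * (A ^ 2 - R ^ 2)
  have hc : c = (A + R) * (ω ^ 2 * (A - R)) := by ring
  have hc0 : 0 ≤ c := by rw [hc]; exact mul_nonneg hA.le (mul_nonneg (sq_nonneg ω) (by linarith))
  set I₀ := ω ^ 2 * (A - R) * z₀ ^ 2 + 2 / 3 * (A + R) ^ (-(3 / 2) : ℝ) * z₀ ^ 3 with hI₀_def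
  have hI (t : ℝ) : lewisInvariant ω (A + R * cos (2 * ω * t)) (-(2 * ω * R) * sin (2 * ω * t))
      (-(4 * ω ^ 2 * R) * cos (2 * ω * t)) (z t) (deriv z t) = I₀ := by
    rw [lewisInvariant_cos_eq hpos (fun t => (hz1 t).hasDerivAt)
      (fun t => (hz2 t).hasDerivAt.congr_deriv (by rw [← hg]; linarith [hode t])) t 0]
    simp only [lewisInvariant, hinit, hinit', mul_zero, cos_zero, sin_zero]
    rw [hI₀_def]
    ring_nf
  have hbound (t : ℝ) : cubicPotential c √(A + R * cos (2 * ω * t)) (z t) ≤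
      (A + R * cos (2 * ω * t)) * I₀ :=
    hI t ▸ cubicPotential_le_mul_lewisInvariant (hpos t) (z t) (deriv z t)
  have hI₀ : I₀ < c ^ 3 / 3 := by
    have := cubicPotential_lt_of_lt_half hc0 hs hz₀.le
      (by rw [rpow_three_halves hA.le] at hcrit; linarith)
    rw [sq_sqrt hA.le, hc, cubicPotential_mul_sqrt hA, ← hc] at this
    nlinarith
  have hbarrier := neg_mul_sqrt_lt_of_cubicPotential_le (by fun_prop) hz1.continuous hpos hI₀
    hbound (t₀ := 0) (by rw [hinit]; nlinarith [sqrt_nonneg (A + R * cos (2 * ω * 0))])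
  have hk : A + R * cos (2 * ω * (k * π / ω)) = A + R := by
    rw [show 2 * ω * (k * π / ω) = k * (2 * π) by field_simp, cos_int_mul_two_pi, mul_one]
  have hset : {x : ℝ | 0 ≤ I₀ - ω ^ 2 * (A - R) * x ^ 2 - 2 / 3 * (A + R) ^ (-(3 / 2) : ℝ) * x ^ 3}
      = {x | cubicPotential c √(A + R) x ≤ (A + R) * I₀} := by
    ext x
    rw [hc]
    exact (cubicPotential_mul_sqrt_le_iff hA _ _ x).symm
  rw [hset]
  exact mem_connectedComponentIn_cubicPotential hc0 hs (hk ▸ (hbarrier _).le) (hk ▸ hbound _)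
end

section
/- Suppose w : ℝ → ℝ is positive and twice differentiable, f : ℝ → ℝ continuous, and w satisfies the envelope equation w'' + f(t)·w = ω²/w³ with ω > 0. Define Φ(t) = ∫₀ᵗ w(τ)^(-2) dτ. If z solves z'' + f(t)·z = 0 and y is defined by y(Φ(t)) = z(t)/w(t), then y satisfies d²y/dΦ² + ω²·y = 0. -/
/-!
Along the time change `Φ` with `Φ' = w⁻²`, the chain rule turns `d/dΦ` into `w² d/dt`.
Applied to `y ∘ Φ = z / w` it gives `dy/dΦ = w z' - w' z`, the Wronskian of `w` and `z`, and a
second application gives `d²y/dΦ² = w² (w z'' - w'' z)`. The two differential equations make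
`w z'' - w'' z = -ω² z / w³`, hence `d²y/dΦ² = -ω² z / w = -ω² y`.
-/

section TimeChange

variable {𝕜 : Type*} [NontriviallyNormedField 𝕜]

noncomputable def wronskian (u v : 𝕜 → 𝕜) (t : 𝕜) : 𝕜 :=
  u t * deriv v t - deriv u t * v t

variable {u v : 𝕜 → 𝕜} {t : 𝕜}

theorem hasDerivAt_div_wronskian (hu : DifferentiableAt 𝕜 u t) (hv : DifferentiableAt 𝕜 v t)
    (hut : u t ≠ 0) : HasDerivAt (fun s => v s / u s) (wronskian u v t / u t ^ 2) t := by
  refine (hv.hasDerivAt.div hu.hasDerivAt hut).congr_deriv ?_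
  rw [wronskian]
  ring

theorem hasDerivAt_wronskian (hu : DifferentiableAt 𝕜 u t) (hv : DifferentiableAt 𝕜 v t)
    (hu' : DifferentiableAt 𝕜 (deriv u) t) (hv' : DifferentiableAt 𝕜 (deriv v) t) :
    HasDerivAt (wronskian u v) (u t * deriv (deriv v) t - deriv (deriv u) t * v t) t := by
  refine ((hu.hasDerivAt.mul hv'.hasDerivAt).sub (hu'.hasDerivAt.mul hv.hasDerivAt)).congr_deriv ?_
  ring

theorem deriv_apply_eq_div_of_comp_eq {y Φ g : 𝕜 → 𝕜} {φ g' : 𝕜}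
    (hy : DifferentiableAt 𝕜 y (Φ t)) (hΦ : HasDerivAt Φ φ t) (hφ : φ ≠ 0)
    (hg : HasDerivAt g g' t) (hcomp : ∀ s, y (Φ s) = g s) : deriv y (Φ t) = g' / φ := by
  have hyΦ : HasDerivAt g (deriv y (Φ t) * φ) t := by
    simpa only [Function.comp_def, hcomp] using hy.hasDerivAt.comp t hΦ
  exact eq_div_of_mul_eq hφ (hyΦ.unique hg)

end TimeChange

theorem stmt16_general (ω : ℝ) (f w z y Φ : ℝ → ℝ)
    (hw1 : Differentiable ℝ w) (hw2 : Differentiable ℝ (deriv w))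
    (hwpos : ∀ t, 0 < w t)
    (henv : ∀ t, deriv (deriv w) t + f t * w t = ω ^ 2 / (w t) ^ 3)
    (hΦ : ∀ t, Φ t = ∫ τ in (0 : ℝ)..t, (w τ) ^ (-2 : ℤ))
    (hz1 : Differentiable ℝ z) (hz2 : Differentiable ℝ (deriv z))
    (hzode : ∀ t, deriv (deriv z) t + f t * z t = 0)
    (hy : ContDiff ℝ 2 y)
    (hyd : ∀ t, y (Φ t) = z t / w t) :
    ∀ t, deriv (deriv y) (Φ t) + ω ^ 2 * y (Φ t) = 0 := by
  have hwne (t : ℝ) : w t ≠ 0 := (hwpos t).ne'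
  have hΦ' (t : ℝ) : HasDerivAt Φ (w t ^ 2)⁻¹ t := by
    have hcont : Continuous fun τ => w τ ^ (-2 : ℤ) :=
      hw1.continuous.zpow₀ _ fun τ => Or.inl (hwne τ)
    rw [funext hΦ]
    simpa [zpow_neg] using (hcont.integral_hasStrictDerivAt 0 t).hasDerivAt
  have hdy (t : ℝ) : deriv y (Φ t) = wronskian w z t := by
    rw [deriv_apply_eq_div_of_comp_eq (hy.differentiable two_ne_zero _) (hΦ' t)
      (inv_ne_zero (pow_ne_zero 2 (hwne t))) (hasDerivAt_div_wronskian (hw1 t) (hz1 t) (hwne t))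
      hyd]
    field_simp [hwne t]
  intro t
  have hd2y :
      deriv (deriv y) (Φ t) = (w t * deriv (deriv z) t - deriv (deriv w) t * z t) * w t ^ 2 := by
    rw [deriv_apply_eq_div_of_comp_eq (hy.differentiable_deriv_two _) (hΦ' t)
      (inv_ne_zero (pow_ne_zero 2 (hwne t)))
      (hasDerivAt_wronskian (hw1 t) (hz1 t) (hw2 t) (hz2 t)) hdy, div_inv_eq_mul]
  have hcube : (deriv (deriv w) t + f t * w t) * w t ^ 3 = ω ^ 2 := by
    rw [henv t, div_mul_cancel₀ _ (pow_ne_zero 3 (hwne t))]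
  have hcomb : w t * deriv (deriv z) t - deriv (deriv w) t * z t = -ω ^ 2 * z t / w t ^ 3 := by
    rw [eq_div_iff (pow_ne_zero 3 (hwne t))]
    linear_combination w t ^ 4 * hzode t - z t * hcube
  rw [hd2y, hcomb, hyd]
  field_simp [hwne t]
  ring

theorem stmt16 (ω : ℝ) (hω : ω > 0) (f w z y Φ : ℝ → ℝ)
    (hf : Continuous f)
    (hw1 : Differentiable ℝ w) (hw2 : Differentiable ℝ (deriv w))
    (hwpos : ∀ t, 0 < w t)
    (henv : ∀ t, deriv (deriv w) t + f t * w t = ω ^ 2 / (w t) ^ 3)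
    (hΦ : ∀ t, Φ t = ∫ τ in (0 : ℝ)..t, (w τ) ^ (-2 : ℤ))
    (hz1 : Differentiable ℝ z) (hz2 : Differentiable ℝ (deriv z))
    (hzode : ∀ t, deriv (deriv z) t + f t * z t = 0)
    (hy : ContDiff ℝ 2 y)
    (hyd : ∀ t, y (Φ t) = z t / w t) :
    ∀ t, deriv (deriv y) (Φ t) + ω ^ 2 * y (Φ t) = 0 :=
  stmt16_general ω f w z y Φ hw1 hw2 hwpos henv hΦ hz1 hz2 hzode hy hyd
end
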